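/- Let σ be the componentwise ReLU on ℝ^k with k ≥ 3. Let g(x) = z^{[n]} ∘ σ ∘ ··· ∘ σ ∘ z^{[1]}(x) be a residual network with n residual blocks z^{[i]}(x) = W_{i,2} σ(W_{i,1} x) + x, W_{i,1}, W_{i,2} ∈ ℝ^{k × k}, and let λ = max_{i=1,...,n} max{‖W_{i,1}‖, ‖W_{i,2}‖}. Let δ > 0 and N ∈ ℕ, and suppose each weight matrix is quantized so that all columns q of each Q_{i,1}, Q_{i,2} satisfy, against the corresponding columns w of W_{i,1}, W_{i,2}, ‖w − q‖ ≤ (δ k / (2N)) (4√(k+3) N^{1 − 1/k} − 4√(k+3) + 1). Let g_Q(x) = z_Q^{[n]} ∘ σ ∘ ··· ∘ σ ∘ z_Q^{[1]}(x) with z_Q^{[i]}(x) = Q_{i,2} σ(Q_{i,1} x) + x. Then for every input X ∈ ℝ^k, ‖g(X) − g_Q(X)‖ ≤ 4δk√(k(k+3)) (δk√(k(k+3)) + λ) N^{−1/k} ‖X‖ · Σ_{j=0}^{n−1} (λ² + 1)^j ( (2δk√(k(k+3)) N^{−1/k} + λ)² + 1 )^{n−1−j}. -/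

import Mathlib

open scoped RealInnerProductSpace BigOperators

/-- The matrix 2-norm (operator norm w.r.t. Euclidean norms), i.e. the largest
singular value. -/
noncomputable def opNorm {m n : ℕ} (A : Matrix (Fin m) (Fin n) ℝ) : ℝ :=
  ‖LinearMap.toContinuousLinearMap (Matrix.toEuclideanLin A)‖

/-- The `j`-th column of a matrix, viewed as a vector of `ℝ^m` with the Euclidean norm. -/
noncomputable def matCol {m n : ℕ} (A : Matrix (Fin m) (Fin n) ℝ) (j : Fin n) :
    EuclideanSpace ℝ (Fin m) :=
  WithLp.toLp 2 (fun i => A i j)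

/-- Frame variation `σ(F,p)` of the ordered family `v = e ∘ p`:
`∑_{i=1}^{N-1} ‖v i - v (i+1)‖`. -/
noncomputable def frameVar {E : Type*} [NormedAddCommGroup E] :
    {N : ℕ} → (Fin N → E) → ℝ
  | 0, _ => 0
  | n + 1, v => ∑ i : Fin n, ‖v i.castSucc - v i.succ‖

/-- The midrise quantization alphabet `A^δ_K`. -/
def midrise (δ : ℝ) (K : ℕ) : Set ℝ :=
  {a | ∃ j : Fin (2 * K), a = (-(K : ℝ) + 1 / 2 + (j : ℕ)) * δ}

/-- Componentwise application of a scalar function to a Euclidean vector. -/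
noncomputable def cwMap (σ : ℝ → ℝ) {d : ℕ} (v : EuclideanSpace ℝ (Fin d)) :
    EuclideanSpace ℝ (Fin d) :=
  WithLp.toLp 2 (fun j => σ (v j))

/-- `layerSeq σ m W X i` is the activated output after `i` layers:
`z_0 = X`, `z_{i+1} = σ.(W_i z_i)`. -/
noncomputable def layerSeq (σ : ℝ → ℝ) (m : ℕ → ℕ)
    (W : (i : ℕ) → Matrix (Fin (m (i + 1))) (Fin (m i)) ℝ)
    (X : EuclideanSpace ℝ (Fin (m 0))) : (i : ℕ) → EuclideanSpace ℝ (Fin (m i))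
  | 0 => X
  | i + 1 => cwMap σ (Matrix.toEuclideanLin (W i) (layerSeq σ m W X i))

/-- The `n`-layer feed-forward network `W_n σ(W_{n-1} σ(⋯ σ(W_1 X)⋯))`
(no activation after the last layer, no biases). -/
noncomputable def net (σ : ℝ → ℝ) (m : ℕ → ℕ)
    (W : (i : ℕ) → Matrix (Fin (m (i + 1))) (Fin (m i)) ℝ)
    (n : ℕ) (X : EuclideanSpace ℝ (Fin (m 0))) : EuclideanSpace ℝ (Fin (m n)) :=
  match n with
  | 0 => X
  | k + 1 => Matrix.toEuclideanLin (W k) (layerSeq σ m W X k)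

/-- Componentwise ReLU. -/
noncomputable def relu {d : ℕ} (v : EuclideanSpace ℝ (Fin d)) : EuclideanSpace ℝ (Fin d) :=
  cwMap (fun t => max 0 t) v

/-- A residual block `z(x) = W₂ σ(W₁ x) + x` with ReLU activation `σ`. -/
noncomputable def resBlock {k : ℕ} (W1 W2 : Matrix (Fin k) (Fin k) ℝ)
    (x : EuclideanSpace ℝ (Fin k)) : EuclideanSpace ℝ (Fin k) :=
  Matrix.toEuclideanLin W2 (relu (Matrix.toEuclideanLin W1 x)) + x

/-- Partial compositions of a residual network:
`y_0 = X`, `y_i = z^{[i]} ∘ σ ∘ ⋯ ∘ σ ∘ z^{[1]} (X)`, where block `i` (1-based)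
uses matrices `W1 (i-1)`, `W2 (i-1)`. -/
noncomputable def resPartial {k : ℕ} (W1 W2 : ℕ → Matrix (Fin k) (Fin k) ℝ)
    (X : EuclideanSpace ℝ (Fin k)) : ℕ → EuclideanSpace ℝ (Fin k)
  | 0 => X
  | 1 => resBlock (W1 0) (W2 0) X
  | i + 2 => resBlock (W1 (i + 1)) (W2 (i + 1)) (relu (resPartial W1 W2 X (i + 1)))


lemma opNorm_nonneg' {m n : ℕ} (A : Matrix (Fin m) (Fin n) ℝ) : 0 ≤ opNorm A :=
  norm_nonneg _

lemma le_opNorm' {m n : ℕ} (A : Matrix (Fin m) (Fin n) ℝ) (x : EuclideanSpace ℝ (Fin n)) :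
    ‖Matrix.toEuclideanLin A x‖ ≤ opNorm A * ‖x‖ := by
  simpa [opNorm] using (LinearMap.toContinuousLinearMap (Matrix.toEuclideanLin A)).le_opNorm x

lemma euclid_sub_le {m n : ℕ} (A Q : Matrix (Fin m) (Fin n) ℝ) (x : EuclideanSpace ℝ (Fin n)) :
    ‖Matrix.toEuclideanLin A x - Matrix.toEuclideanLin Q x‖ ≤ opNorm (A - Q) * ‖x‖ := by
  have h : Matrix.toEuclideanLin A x - Matrix.toEuclideanLin Q x
      = Matrix.toEuclideanLin (A - Q) x := by
    rw [map_sub]; rfl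
  rw [h]; exact le_opNorm' _ _

lemma l1_le_sqrt_l2 {n : ℕ} (x : EuclideanSpace ℝ (Fin n)) :
    ∑ c, |x c| ≤ Real.sqrt n * ‖x‖ := by
  have h := Finset.sum_mul_sq_le_sq_mul_sq Finset.univ (fun c => |x c|) (fun _ => (1:ℝ))
  simp only [mul_one, one_pow, Finset.sum_const, Finset.card_univ, Fintype.card_fin,
    nsmul_eq_mul] at h
  have hx : ∑ c, |x c| ^ 2 = ‖x‖ ^ 2 := by
    rw [EuclideanSpace.norm_eq, Real.sq_sqrt (by positivity)]
    simp [Real.norm_eq_abs]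
  have hS : (0:ℝ) ≤ ∑ c, |x c| := Finset.sum_nonneg fun c _ => abs_nonneg _
  have h2 : (∑ c, |x c|) ^ 2 ≤ (Real.sqrt n * ‖x‖) ^ 2 := by
    rw [mul_pow, Real.sq_sqrt (by positivity)]
    calc (∑ c, |x c|) ^ 2 ≤ (∑ c, |x c| ^ 2) * n := h
      _ = n * ‖x‖ ^ 2 := by rw [hx]; ring
  have hB : (0:ℝ) ≤ Real.sqrt n * ‖x‖ := by positivity
  nlinarith [h2, hS, hB]

lemma opNorm_le_col {m n : ℕ} (A : Matrix (Fin m) (Fin n) ℝ) (C : ℝ) (hC : 0 ≤ C)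
    (h : ∀ c, ‖matCol A c‖ ≤ C) : opNorm A ≤ Real.sqrt n * C := by
  refine ContinuousLinearMap.opNorm_le_bound _ (by positivity) (fun x => ?_)
  have hx : (LinearMap.toContinuousLinearMap (Matrix.toEuclideanLin A)) x
      = ∑ c, x c • matCol A c := by
    ext i
    have hs : (∑ c, x c • matCol A c) i = ∑ c, x c * A i c := by
      have h2 := map_sum (EuclideanSpace.projₗ (𝕜 := ℝ) i)
        (fun c : Fin n => x c • matCol A c) Finset.univ
      simp only [PiLp.projₗ_apply, PiLp.toLp_apply, PiLp.smul_apply, smul_eq_mul,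
        matCol] at h2
      exact h2
    rw [hs]
    simp [Matrix.toEuclideanLin_apply, Matrix.mulVec, dotProduct, mul_comm]
  rw [hx]
  calc ‖∑ c, x c • matCol A c‖ ≤ ∑ c, ‖x c • matCol A c‖ := norm_sum_le _ _
    _ = ∑ c, |x c| * ‖matCol A c‖ := by simp [norm_smul, Real.norm_eq_abs]
    _ ≤ ∑ c, |x c| * C :=
        Finset.sum_le_sum fun c _ => mul_le_mul_of_nonneg_left (h c) (abs_nonneg _)
    _ = (∑ c, |x c|) * C := by rw [Finset.sum_mul]
    _ ≤ Real.sqrt n * ‖x‖ * C :=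
        mul_le_mul_of_nonneg_right (l1_le_sqrt_l2 x) hC
    _ = Real.sqrt n * C * ‖x‖ := by ring

lemma matCol_sub {m n : ℕ} (A Q : Matrix (Fin m) (Fin n) ℝ) (c : Fin n) :
    matCol (A - Q) c = matCol A c - matCol Q c := by
  ext i; simp [matCol, Matrix.sub_apply]

lemma relu_zero {d : ℕ} : relu (0 : EuclideanSpace ℝ (Fin d)) = 0 := by
  ext i; simp [relu, cwMap]

lemma norm_relu_sub_relu {d : ℕ} (v w : EuclideanSpace ℝ (Fin d)) :
    ‖relu v - relu w‖ ≤ ‖v - w‖ := by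
  rw [EuclideanSpace.norm_eq, EuclideanSpace.norm_eq]
  apply Real.sqrt_le_sqrt
  apply Finset.sum_le_sum
  intro i _
  have h1 : ‖(relu v - relu w) i‖ ≤ ‖(v - w) i‖ := by
    simp only [PiLp.sub_apply, relu, cwMap, PiLp.toLp_apply, Real.norm_eq_abs]
    calc |max 0 (v i) - max 0 (w i)| = |max (v i) 0 - max (w i) 0| := by rw [max_comm, max_comm (w i)]
      _ ≤ |v i - w i| := abs_max_sub_max_le_abs _ _ _
  exact pow_le_pow_left₀ (norm_nonneg _) h1 2

lemma norm_relu_le {d : ℕ} (v : EuclideanSpace ℝ (Fin d)) : ‖relu v‖ ≤ ‖v‖ := by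
  simpa [relu_zero] using norm_relu_sub_relu v 0

lemma block_norm {k : ℕ} (Q1 Q2 : Matrix (Fin k) (Fin k) ℝ) (κ : ℝ)
    (h1 : opNorm Q1 ≤ κ) (h2 : opNorm Q2 ≤ κ) (x : EuclideanSpace ℝ (Fin k)) :
    ‖resBlock Q1 Q2 x‖ ≤ (κ ^ 2 + 1) * ‖x‖ := by
  have hκ : 0 ≤ κ := le_trans (opNorm_nonneg' Q1) h1
  have t1 : ‖Matrix.toEuclideanLin Q2 (relu (Matrix.toEuclideanLin Q1 x))‖ ≤ κ * (κ * ‖x‖) := by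
    calc ‖Matrix.toEuclideanLin Q2 (relu (Matrix.toEuclideanLin Q1 x))‖
        ≤ opNorm Q2 * ‖relu (Matrix.toEuclideanLin Q1 x)‖ := le_opNorm' _ _
      _ ≤ κ * (κ * ‖x‖) := by
          have h3 : ‖relu (Matrix.toEuclideanLin Q1 x)‖ ≤ κ * ‖x‖ :=
            le_trans (norm_relu_le _) (le_trans (le_opNorm' _ _)
              (mul_le_mul_of_nonneg_right h1 (norm_nonneg _)))
          exact mul_le_mul h2 h3 (norm_nonneg _) hκ
  calc ‖resBlock Q1 Q2 x‖ ≤ ‖Matrix.toEuclideanLin Q2 (relu (Matrix.toEuclideanLin Q1 x))‖ + ‖x‖ :=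
        norm_add_le _ _
    _ ≤ κ * (κ * ‖x‖) + ‖x‖ := by linarith
    _ = (κ ^ 2 + 1) * ‖x‖ := by ring

lemma block_diff {k : ℕ} (W1 W2 Q1 Q2 : Matrix (Fin k) (Fin k) ℝ) (lam η : ℝ)
    (hW1 : opNorm W1 ≤ lam) (hW2 : opNorm W2 ≤ lam)
    (h1 : opNorm (W1 - Q1) ≤ η) (h2 : opNorm (W2 - Q2) ≤ η)
    (x x' : EuclideanSpace ℝ (Fin k)) :
    ‖resBlock W1 W2 x - resBlock Q1 Q2 x'‖ ≤
      (lam ^ 2 + 1) * ‖x - x'‖ + (η ^ 2 + 2 * η * lam) * ‖x'‖ := by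
  have hlam : 0 ≤ lam := le_trans (opNorm_nonneg' W1) hW1
  have hη : 0 ≤ η := le_trans (opNorm_nonneg' _) h1
  set u := relu (Matrix.toEuclideanLin W1 x)
  set v := relu (Matrix.toEuclideanLin W1 x')
  set w := relu (Matrix.toEuclideanLin Q1 x')
  have hQ1 : opNorm Q1 ≤ lam + η := by
    calc opNorm Q1 ≤ opNorm W1 + opNorm (W1 - Q1) := by
          have hq : Q1 = W1 - (W1 - Q1) := by abel
          calc opNorm Q1 = opNorm (W1 - (W1 - Q1)) := by rw [← hq]
            _ ≤ opNorm W1 + opNorm (W1 - Q1) := by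
                unfold opNorm; rw [map_sub, map_sub]; exact norm_sub_le _ _
      _ ≤ lam + η := add_le_add hW1 h1
  have hQ2 : opNorm Q2 ≤ lam + η := by
    have hq : Q2 = W2 - (W2 - Q2) := by abel
    calc opNorm Q2 = opNorm (W2 - (W2 - Q2)) := by rw [← hq]
      _ ≤ opNorm W2 + opNorm (W2 - Q2) := by
          unfold opNorm; rw [map_sub, map_sub]; exact norm_sub_le _ _
      _ ≤ lam + η := add_le_add hW2 h2
  have key : Matrix.toEuclideanLin W2 u - Matrix.toEuclideanLin Q2 w =
      Matrix.toEuclideanLin W2 (u - v) +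
        ((Matrix.toEuclideanLin W2 v - Matrix.toEuclideanLin Q2 v) +
          Matrix.toEuclideanLin Q2 (v - w)) := by
    rw [map_sub, map_sub]; abel
  have T1 : ‖Matrix.toEuclideanLin W2 (u - v)‖ ≤ lam * (lam * ‖x - x'‖) := by
    have huv : ‖u - v‖ ≤ lam * ‖x - x'‖ := by
      calc ‖u - v‖ ≤ ‖Matrix.toEuclideanLin W1 x - Matrix.toEuclideanLin W1 x'‖ :=
            norm_relu_sub_relu _ _
        _ = ‖Matrix.toEuclideanLin W1 (x - x')‖ := by rw [map_sub]
        _ ≤ opNorm W1 * ‖x - x'‖ := le_opNorm' _ _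
        _ ≤ lam * ‖x - x'‖ := mul_le_mul_of_nonneg_right hW1 (norm_nonneg _)
    calc ‖Matrix.toEuclideanLin W2 (u - v)‖ ≤ opNorm W2 * ‖u - v‖ := le_opNorm' _ _
      _ ≤ lam * (lam * ‖x - x'‖) := mul_le_mul hW2 huv (norm_nonneg _) hlam
  have hv : ‖v‖ ≤ lam * ‖x'‖ := by
    calc ‖v‖ ≤ ‖Matrix.toEuclideanLin W1 x'‖ := norm_relu_le _
      _ ≤ opNorm W1 * ‖x'‖ := le_opNorm' _ _
      _ ≤ lam * ‖x'‖ := mul_le_mul_of_nonneg_right hW1 (norm_nonneg _)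
  have T2 : ‖Matrix.toEuclideanLin W2 v - Matrix.toEuclideanLin Q2 v‖ ≤ η * (lam * ‖x'‖) := by
    calc ‖Matrix.toEuclideanLin W2 v - Matrix.toEuclideanLin Q2 v‖
        ≤ opNorm (W2 - Q2) * ‖v‖ := euclid_sub_le _ _ _
      _ ≤ η * (lam * ‖x'‖) := mul_le_mul h2 hv (norm_nonneg _) hη
  have T3 : ‖Matrix.toEuclideanLin Q2 (v - w)‖ ≤ (lam + η) * (η * ‖x'‖) := by
    have hvw : ‖v - w‖ ≤ η * ‖x'‖ := by
      calc ‖v - w‖ ≤ ‖Matrix.toEuclideanLin W1 x' - Matrix.toEuclideanLin Q1 x'‖ :=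
            norm_relu_sub_relu _ _
        _ ≤ opNorm (W1 - Q1) * ‖x'‖ := euclid_sub_le _ _ _
        _ ≤ η * ‖x'‖ := mul_le_mul_of_nonneg_right h1 (norm_nonneg _)
    calc ‖Matrix.toEuclideanLin Q2 (v - w)‖ ≤ opNorm Q2 * ‖v - w‖ := le_opNorm' _ _
      _ ≤ (lam + η) * (η * ‖x'‖) :=
          mul_le_mul hQ2 hvw (norm_nonneg _) (by linarith)
  have hsplit : resBlock W1 W2 x - resBlock Q1 Q2 x' =
      (Matrix.toEuclideanLin W2 u - Matrix.toEuclideanLin Q2 w) + (x - x') := by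
    unfold resBlock; abel
  calc ‖resBlock W1 W2 x - resBlock Q1 Q2 x'‖
      ≤ ‖Matrix.toEuclideanLin W2 u - Matrix.toEuclideanLin Q2 w‖ + ‖x - x'‖ := by
        rw [hsplit]; exact norm_add_le _ _
    _ ≤ (‖Matrix.toEuclideanLin W2 (u - v)‖ +
          (‖Matrix.toEuclideanLin W2 v - Matrix.toEuclideanLin Q2 v‖ +
            ‖Matrix.toEuclideanLin Q2 (v - w)‖)) + ‖x - x'‖ := by
        rw [key]
        exact add_le_add (le_trans (norm_add_le _ _)
          (add_le_add le_rfl (norm_add_le _ _))) le_rfl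
    _ ≤ (lam * (lam * ‖x - x'‖) + (η * (lam * ‖x'‖) + (lam + η) * (η * ‖x'‖))) + ‖x - x'‖ := by
        gcongr
    _ = (lam ^ 2 + 1) * ‖x - x'‖ + (η ^ 2 + 2 * η * lam) * ‖x'‖ := by ring


/-- (Theorem 6.3: error bound between a residual network with
`n` residual blocks and its frame-quantized network; block `i` (1-based) uses
the matrices indexed `i - 1`, and the hypothesis is the per-column first-order
ΣΔ error bound). -/
theorem stmt15 {k : ℕ} (hk : 3 ≤ k) (n : ℕ) (hn : 0 < n)
    (W1 W2 Q1 Q2 : ℕ → Matrix (Fin k) (Fin k) ℝ) (lam : ℝ)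
    (hlam : lam = Finset.sup' (Finset.range n) (Finset.nonempty_range_iff.mpr hn.ne')
      (fun i => max (opNorm (W1 i)) (opNorm (W2 i))))
    (δ : ℝ) (hδ : 0 < δ) (N : ℕ) (hN : 0 < N)
    (hcol1 : ∀ i < n, ∀ c : Fin k,
      ‖matCol (W1 i) c - matCol (Q1 i) c‖ ≤
        δ * k / (2 * N) * (4 * Real.sqrt ((k : ℝ) + 3) * (N : ℝ) ^ (1 - 1 / (k : ℝ)) -
          4 * Real.sqrt ((k : ℝ) + 3) + 1))
    (hcol2 : ∀ i < n, ∀ c : Fin k,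
      ‖matCol (W2 i) c - matCol (Q2 i) c‖ ≤
        δ * k / (2 * N) * (4 * Real.sqrt ((k : ℝ) + 3) * (N : ℝ) ^ (1 - 1 / (k : ℝ)) -
          4 * Real.sqrt ((k : ℝ) + 3) + 1))
    (X : EuclideanSpace ℝ (Fin k)) :
    ‖resPartial W1 W2 X n - resPartial Q1 Q2 X n‖ ≤
      4 * δ * k * Real.sqrt ((k : ℝ) * (k + 3)) *
          (δ * k * Real.sqrt ((k : ℝ) * (k + 3)) + lam) * (N : ℝ) ^ (-(1 / (k : ℝ))) * ‖X‖ *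
        ∑ j ∈ Finset.range n, (lam ^ 2 + 1) ^ j *
          ((2 * δ * k * Real.sqrt ((k : ℝ) * (k + 3)) * (N : ℝ) ^ (-(1 / (k : ℝ))) + lam) ^ 2 + 1)
            ^ (n - 1 - j) := by
  have hkpos : (0:ℝ) < k := by exact_mod_cast lt_of_lt_of_le (by norm_num) hk
  have hNpos : (0:ℝ) < N := by exact_mod_cast hN
  have hN1 : (1:ℝ) ≤ N := by exact_mod_cast hN
  set s : ℝ := Real.sqrt ((k : ℝ) * (k + 3)) with hs
  set t : ℝ := (N : ℝ) ^ (-(1 / (k : ℝ))) with ht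
  set η : ℝ := 2 * δ * k * s * t with hη
  have hspos : 0 < s := Real.sqrt_pos.mpr (by positivity)
  have htpos : 0 < t := Real.rpow_pos_of_pos hNpos _
  have ht1 : t ≤ 1 := Real.rpow_le_one_of_one_le_of_nonpos hN1 (by
    have h0 : (0:ℝ) < 1 / (k:ℝ) := by positivity
    linarith)
  have hηpos : 0 < η := by positivity
  clear_value η t s
  -- the column bound constant
  set Ccol : ℝ := δ * k / (2 * N) * (4 * Real.sqrt ((k : ℝ) + 3) * (N : ℝ) ^ (1 - 1 / (k : ℝ)) -
      4 * Real.sqrt ((k : ℝ) + 3) + 1) with hCcol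
  have hsqrt3 : (1:ℝ) ≤ Real.sqrt ((k:ℝ) + 3) := by
    rw [show (1:ℝ) = Real.sqrt 1 by simp]
    exact Real.sqrt_le_sqrt (by linarith)
  have hrpow1 : (1:ℝ) ≤ (N : ℝ) ^ (1 - 1 / (k : ℝ)) := by
    apply Real.one_le_rpow hN1
    have h3 : (3:ℝ) ≤ (k:ℝ) := by exact_mod_cast hk
    have : 1 / (k:ℝ) ≤ 1 / 3 := by
      apply one_div_le_one_div_of_le <;> linarith
    linarith
  have hCcolpos : 0 ≤ Ccol := by
    rw [hCcol]
    apply mul_nonneg (by positivity)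
    nlinarith [hsqrt3, hrpow1]
  have hrpow_split : (N : ℝ) ^ (1 - 1 / (k : ℝ)) = N * t := by
    rw [ht, show (1 : ℝ) - 1 / (k:ℝ) = 1 + -(1 / (k:ℝ)) by ring, Real.rpow_add hNpos,
      Real.rpow_one]
  have hkey : Real.sqrt k * Ccol ≤ η := by
    have hsplit : s = Real.sqrt k * Real.sqrt ((k:ℝ) + 3) := by
      rw [hs, Real.sqrt_mul (le_of_lt hkpos)]
    have h1 : Ccol ≤ δ * k / (2 * N) * (4 * Real.sqrt ((k : ℝ) + 3) * (N * t)) := by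
      rw [hCcol, hrpow_split]
      apply mul_le_mul_of_nonneg_left _ (by positivity)
      nlinarith [hsqrt3]
    have h2 : δ * k / (2 * N) * (4 * Real.sqrt ((k : ℝ) + 3) * (N * t)) =
        2 * δ * k * Real.sqrt ((k:ℝ) + 3) * t := by
      field_simp
      ring
    calc Real.sqrt k * Ccol ≤ Real.sqrt k * (2 * δ * k * Real.sqrt ((k:ℝ) + 3) * t) := by
          rw [← h2]; exact mul_le_mul_of_nonneg_left h1 (Real.sqrt_nonneg _)
      _ = η := by rw [hη, hsplit]; ring
  -- matrix norm error bounds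
  have hop1 : ∀ i < n, opNorm (W1 i - Q1 i) ≤ η := by
    intro i hi
    refine le_trans (opNorm_le_col _ Ccol hCcolpos fun c => ?_) hkey
    rw [matCol_sub]; exact hcol1 i hi c
  have hop2 : ∀ i < n, opNorm (W2 i - Q2 i) ≤ η := by
    intro i hi
    refine le_trans (opNorm_le_col _ Ccol hCcolpos fun c => ?_) hkey
    rw [matCol_sub]; exact hcol2 i hi c
  have hW1lam : ∀ i < n, opNorm (W1 i) ≤ lam := by
    intro i hi
    rw [hlam]
    exact le_trans (le_max_left _ _)
      (Finset.le_sup' (f := fun i => max (opNorm (W1 i)) (opNorm (W2 i)))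
        (Finset.mem_range.mpr hi))
  have hW2lam : ∀ i < n, opNorm (W2 i) ≤ lam := by
    intro i hi
    rw [hlam]
    exact le_trans (le_max_right _ _)
      (Finset.le_sup' (f := fun i => max (opNorm (W1 i)) (opNorm (W2 i)))
        (Finset.mem_range.mpr hi))
  have hlampos : 0 ≤ lam := le_trans (opNorm_nonneg' (W1 0)) (hW1lam 0 hn)
  set a : ℝ := lam ^ 2 + 1 with ha
  set μ : ℝ := (2 * δ * k * s * t + lam) ^ 2 + 1 with hμ
  set D : ℝ := η ^ 2 + 2 * η * lam with hD
  have hapos : 0 ≤ a := by positivity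
  have hμpos : 0 ≤ μ := by positivity
  have hDpos : 0 ≤ D := by positivity
  clear_value D μ a
  have hDle : D ≤ 4 * δ * k * s * (δ * k * s + lam) * t := by
    have e1 : D = (2*δ*(k:ℝ)*s*t) * (2*δ*(k:ℝ)*s*t + 2*lam) := by rw [hD, hη]; ring
    have e2 : 4 * δ * (k:ℝ) * s * (δ * (k:ℝ) * s + lam) * t =
        (2*δ*(k:ℝ)*s*t) * (2*δ*(k:ℝ)*s + 2*lam) := by ring
    rw [e1, e2]
    have h3 : (2*δ*(k:ℝ)*s) * t ≤ (2*δ*(k:ℝ)*s) * 1 :=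
      mul_le_mul_of_nonneg_left ht1 (by positivity)
    have h4 : 2*δ*(k:ℝ)*s*t ≤ 2*δ*(k:ℝ)*s := by linarith
    exact mul_le_mul_of_nonneg_left (by linarith) (by positivity)
  have hQnorm : ∀ i < n, ∀ x, ‖resBlock (Q1 i) (Q2 i) x‖ ≤ μ * ‖x‖ := by
    intro i hi x
    have hq1 : opNorm (Q1 i) ≤ lam + η := by
      have hq : Q1 i = W1 i - (W1 i - Q1 i) := by abel
      calc opNorm (Q1 i) = opNorm (W1 i - (W1 i - Q1 i)) := by rw [← hq]
        _ ≤ opNorm (W1 i) + opNorm (W1 i - Q1 i) := by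
            unfold opNorm; rw [map_sub, map_sub]; exact norm_sub_le _ _
        _ ≤ lam + η := add_le_add (hW1lam i hi) (hop1 i hi)
    have hq2 : opNorm (Q2 i) ≤ lam + η := by
      have hq : Q2 i = W2 i - (W2 i - Q2 i) := by abel
      calc opNorm (Q2 i) = opNorm (W2 i - (W2 i - Q2 i)) := by rw [← hq]
        _ ≤ opNorm (W2 i) + opNorm (W2 i - Q2 i) := by
            unfold opNorm; rw [map_sub, map_sub]; exact norm_sub_le _ _
        _ ≤ lam + η := add_le_add (hW2lam i hi) (hop2 i hi)
    have := block_norm (Q1 i) (Q2 i) (lam + η) hq1 hq2 x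
    have hμeq : ((lam + η) ^ 2 + 1) = μ := by rw [hμ, hη]; ring
    rw [hμeq] at this
    exact this
  have hdiff : ∀ i < n, ∀ x x', ‖resBlock (W1 i) (W2 i) x - resBlock (Q1 i) (Q2 i) x'‖ ≤
      a * ‖x - x'‖ + D * ‖x'‖ := by
    intro i hi x x'
    rw [ha, hD]
    exact block_diff _ _ _ _ lam η (hW1lam i hi) (hW2lam i hi)
      (hop1 i hi) (hop2 i hi) x x'
  -- main induction
  have main : ∀ m, m + 1 ≤ n →
      ‖resPartial W1 W2 X (m + 1) - resPartial Q1 Q2 X (m + 1)‖ ≤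
        D * ‖X‖ * ∑ l ∈ Finset.range (m + 1), a ^ l * μ ^ (m - l) ∧
      ‖resPartial Q1 Q2 X (m + 1)‖ ≤ μ ^ (m + 1) * ‖X‖ := by
    intro m
    induction m with
    | zero =>
      intro h
      constructor
      · have := hdiff 0 h X X
        simpa [resPartial] using this
      · simpa [pow_one, resPartial] using hQnorm 0 h X
    | succ m ih =>
      intro h
      obtain ⟨ihd, ihn⟩ := ih (by omega)
      have hm1 : m + 1 < n := by omega
      have hrelu_n : ‖relu (resPartial Q1 Q2 X (m + 1))‖ ≤ μ ^ (m + 1) * ‖X‖ :=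
        le_trans (norm_relu_le _) ihn
      have hrelu_d : ‖relu (resPartial W1 W2 X (m + 1)) - relu (resPartial Q1 Q2 X (m + 1))‖ ≤
          D * ‖X‖ * ∑ l ∈ Finset.range (m + 1), a ^ l * μ ^ (m - l) :=
        le_trans (norm_relu_sub_relu _ _) ihd
      have hsum : ∑ l ∈ Finset.range (m + 2), a ^ l * μ ^ (m + 1 - l) =
          a * (∑ l ∈ Finset.range (m + 1), a ^ l * μ ^ (m - l)) + μ ^ (m + 1) := by
        rw [Finset.sum_range_succ', Finset.mul_sum]
        simp only [Nat.succ_sub_succ, pow_zero, one_mul, Nat.sub_zero]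
        congr 1
        exact Finset.sum_congr rfl fun l _ => by ring
      constructor
      · simp only [resPartial]
        calc ‖resBlock (W1 (m+1)) (W2 (m+1)) (relu (resPartial W1 W2 X (m+1))) -
            resBlock (Q1 (m+1)) (Q2 (m+1)) (relu (resPartial Q1 Q2 X (m+1)))‖
            ≤ a * ‖relu (resPartial W1 W2 X (m+1)) - relu (resPartial Q1 Q2 X (m+1))‖ +
              D * ‖relu (resPartial Q1 Q2 X (m+1))‖ := hdiff (m+1) hm1 _ _
          _ ≤ a * (D * ‖X‖ * ∑ l ∈ Finset.range (m + 1), a ^ l * μ ^ (m - l)) +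
              D * (μ ^ (m + 1) * ‖X‖) := by
              gcongr
          _ = D * ‖X‖ * (a * (∑ l ∈ Finset.range (m + 1), a ^ l * μ ^ (m - l)) + μ ^ (m + 1)) := by
              ring
          _ = D * ‖X‖ * ∑ l ∈ Finset.range (m + 2), a ^ l * μ ^ (m + 1 - l) := by rw [hsum]
      · simp only [resPartial]
        calc ‖resBlock (Q1 (m+1)) (Q2 (m+1)) (relu (resPartial Q1 Q2 X (m+1)))‖
            ≤ μ * ‖relu (resPartial Q1 Q2 X (m+1))‖ := hQnorm (m+1) hm1 _
          _ ≤ μ * (μ ^ (m + 1) * ‖X‖) := by gcongr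
          _ = μ ^ (m + 2) * ‖X‖ := by ring
  obtain ⟨m, rfl⟩ : ∃ m, n = m + 1 := ⟨n - 1, (Nat.succ_pred_eq_of_pos hn).symm⟩
  have hfin := (main m (le_refl _)).1
  have hsum_nonneg : 0 ≤ ∑ l ∈ Finset.range (m + 1), a ^ l * μ ^ (m - l) :=
    Finset.sum_nonneg fun l _ => mul_nonneg (pow_nonneg hapos _) (pow_nonneg hμpos _)
  calc ‖resPartial W1 W2 X (m + 1) - resPartial Q1 Q2 X (m + 1)‖
      ≤ D * ‖X‖ * ∑ l ∈ Finset.range (m + 1), a ^ l * μ ^ (m - l) := hfin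
    _ ≤ (4 * δ * k * s * (δ * k * s + lam) * t) * ‖X‖ *
        ∑ l ∈ Finset.range (m + 1), a ^ l * μ ^ (m - l) := by
        gcongr
    _ = 4 * δ * k * s * (δ * k * s + lam) * t * ‖X‖ *
        ∑ j ∈ Finset.range (m + 1), a ^ j * ((η + lam) ^ 2 + 1) ^ (m + 1 - 1 - j) := by
        have hμeq : ((η + lam) ^ 2 + 1) = μ := by rw [hμ, hη]
        rw [hμeq]
        norm_num
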